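/- For all l, r ∈ H' and all σ ∈ ℝ^n_+, with C_σ := C·max{1,σ_1,…,σ_n}, the error of the Galerkin-approximated measurement satisfies |𝓕_{l,r}(σ) − F_{l,r}(σ)| ≤ C_σ · ‖u_σ^l − ũ_σ^l‖ · ‖u_σ^r − ũ_σ^r‖; in particular, for l = r one has 0 ≤ 𝓕_{l,l}(σ) − F_{l,l}(σ) ≤ C_σ · ‖u_σ^l − ũ_σ^l‖². -/

import Mathlib

/-!
Galerkin orthogonality turns the measurement error into the energy product of two Galerkin
errors: `r (u_σ^l - ũ_σ^l) = b_σ (u_σ^r - ũ_σ^r, u_σ^l - ũ_σ^l)`. The claims then follow from the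
Cauchy–Schwarz inequality for the positive semidefinite form `b_σ` and from the bound
`b_σ ≤ max {1, σ_1, …, σ_n} · b_𝟙 ≤ C · max {1, σ_1, …, σ_n} · ‖·‖²`.
-/

section GalerkinError

variable {R M : Type*} [CommRing R] [AddCommGroup M] [Module R M]

theorem galerkin_error_eq {B : M →ₗ[R] M →ₗ[R] R} (hB : ∀ x y, B x y = B y x)
    {V : Submodule R M} {l r : M →ₗ[R] R} {ul utl ur utr : M}
    (hul : ∀ v, B ul v = l v) (hutl : ∀ v ∈ V, B utl v = l v)
    (hur : ∀ v, B ur v = r v) (hutr : utr ∈ V) :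
    r (ul - utl) = B (ur - utr) (ul - utl) := by
  have horth : B (ul - utl) utr = 0 := by
    rw [map_sub B, LinearMap.sub_apply, hul, hutl utr hutr, sub_self]
  rw [map_sub B, LinearMap.sub_apply, hur, hB utr, horth, sub_zero]

end GalerkinError

namespace ContinuousLinearMap

variable {E : Type*} [SeminormedAddCommGroup E] [NormedSpace ℝ E]

theorem abs_apply_le_of_apply_self_le {B : E →L[ℝ] E →L[ℝ] ℝ} (hB : ∀ x y, B x y = B y x)
    (hB0 : ∀ v, 0 ≤ B v v) {K : ℝ} (hK : ∀ v, B v v ≤ K * ‖v‖ ^ 2) (x y : E) :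
    |B x y| ≤ K * ‖x‖ * ‖y‖ := by
  have hcs : B x y ^ 2 ≤ B x x * B y y := by
    rw [sq]
    nth_rw 2 [hB x y]
    exact LinearMap.BilinForm.apply_mul_apply_le_of_forall_zero_le B.toLinearMap₁₂ hB0 x y
  have hKx : 0 ≤ K * ‖x‖ ^ 2 := (hB0 x).trans (hK x)
  have hrhs : 0 ≤ K * ‖x‖ * ‖y‖ := by
    rcases (norm_nonneg x).eq_or_lt with hx | hx
    · simp [← hx]
    · have hK0 : 0 ≤ K := nonneg_of_mul_nonneg_left hKx (by positivity)
      positivity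
  refine abs_le_of_sq_le_sq ?_ hrhs
  calc B x y ^ 2 ≤ B x x * B y y := hcs
    _ ≤ (K * ‖x‖ ^ 2) * (K * ‖y‖ ^ 2) := mul_le_mul (hK x) (hK y) (hB0 y) hKx
    _ = (K * ‖x‖ * ‖y‖) ^ 2 := by ring

end ContinuousLinearMap

section WeightedForm

variable {E ι : Type*} [SeminormedAddCommGroup E] [NormedSpace ℝ E] [Fintype ι]
  (b0 : E →L[ℝ] E →L[ℝ] ℝ) (b : ι → E →L[ℝ] E →L[ℝ] ℝ)

noncomputable def weightedForm (σ : ι → ℝ) : E →L[ℝ] E →L[ℝ] ℝ :=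
  b0 + ∑ i, σ i • b i

variable {b0 b}

theorem weightedForm_apply (σ : ι → ℝ) (x y : E) :
    weightedForm b0 b σ x y = b0 x y + ∑ i, σ i * b i x y := by
  simp [weightedForm, sum_apply]

theorem weightedForm_symm (hb0 : ∀ x y, b0 x y = b0 y x) (hb : ∀ i x y, b i x y = b i y x)
    (σ : ι → ℝ) (x y : E) : weightedForm b0 b σ x y = weightedForm b0 b σ y x := by
  simp only [weightedForm_apply, hb0 x y, hb _ x y]

theorem weightedForm_apply_self_nonneg (hb0 : ∀ v, 0 ≤ b0 v v) (hb : ∀ i v, 0 ≤ b i v v)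
    {σ : ι → ℝ} (hσ : ∀ i, 0 ≤ σ i) (v : E) : 0 ≤ weightedForm b0 b σ v v := by
  rw [weightedForm_apply]
  exact add_nonneg (hb0 v) (Finset.sum_nonneg fun i _ => mul_nonneg (hσ i) (hb i v))

theorem weightedForm_apply_self_le (hb0 : ∀ v, 0 ≤ b0 v v) (hb : ∀ i v, 0 ≤ b i v v)
    {σ : ι → ℝ} {m : ℝ} (hm : 1 ≤ m) (hσm : ∀ i, σ i ≤ m) (v : E) :
    weightedForm b0 b σ v v ≤ m * (b0 v v + ∑ i, b i v v) := by
  rw [weightedForm_apply, mul_add, Finset.mul_sum]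
  exact add_le_add (le_mul_of_one_le_left (hb0 v) hm)
    (Finset.sum_le_sum fun i _ => mul_le_mul_of_nonneg_right (hσm i) (hb i v))

end WeightedForm

theorem stmt_16_general
    {H : Type*} [NormedAddCommGroup H] [InnerProductSpace ℝ H]
    {n : ℕ}
    (b0 : H →L[ℝ] H →L[ℝ] ℝ) (b : Fin n → H →L[ℝ] H →L[ℝ] ℝ)
    (hb0symm : ∀ u v : H, b0 u v = b0 v u)
    (hb0pos : ∀ v : H, 0 ≤ b0 v v)
    (hbsymm : ∀ i, ∀ u v : H, b i u v = b i v u)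
    (hbpos : ∀ i, ∀ v : H, 0 ≤ b i v v)
    (C : ℝ)
    (hbound : ∀ v : H, b0 v v + ∑ i, b i v v ≤ C * ‖v‖ ^ 2)
    (u : (Fin n → ℝ) → (H →L[ℝ] ℝ) → H)
    (hu : ∀ σ : Fin n → ℝ, (∀ i, 0 < σ i) → ∀ l : H →L[ℝ] ℝ,
      ∀ v : H, b0 (u σ l) v + ∑ i, σ i * b i (u σ l) v = l v)
    (V : Submodule ℝ H)
    (ut : (Fin n → ℝ) → (H →L[ℝ] ℝ) → H)
    (hmem : ∀ σ l, ut σ l ∈ V)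
    (hut : ∀ σ : Fin n → ℝ, (∀ i, 0 < σ i) → ∀ l : H →L[ℝ] ℝ,
      ∀ v ∈ V, b0 (ut σ l) v + ∑ i, σ i * b i (ut σ l) v = l v) :
    ∀ l r : H →L[ℝ] ℝ, ∀ σ : Fin n → ℝ, (∀ i, 0 < σ i) →
      |r (u σ l) - r (ut σ l)| ≤
        C * max 1 (⨆ i, σ i) * ‖u σ l - ut σ l‖ * ‖u σ r - ut σ r‖ ∧
      0 ≤ l (u σ l) - l (ut σ l) ∧
      l (u σ l) - l (ut σ l) ≤ C * max 1 (⨆ i, σ i) * ‖u σ l - ut σ l‖ ^ 2 := by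
  intro l r σ hσ
  set m := max 1 (⨆ i, σ i)
  have hσm : ∀ i, σ i ≤ m := fun i =>
    (le_ciSup (Finite.bddAbove_range σ) i).trans (le_max_right _ _)
  set B := weightedForm b0 b σ
  have hBsymm := weightedForm_symm hb0symm hbsymm σ
  have hB0 := weightedForm_apply_self_nonneg hb0pos hbpos fun i => (hσ i).le
  have hBle : ∀ v, B v v ≤ C * m * ‖v‖ ^ 2 := fun v => by
    calc B v v ≤ m * (b0 v v + ∑ i, b i v v) :=
          weightedForm_apply_self_le hb0pos hbpos (le_max_left _ _) hσm v
      _ ≤ m * (C * ‖v‖ ^ 2) :=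
          mul_le_mul_of_nonneg_left (hbound v) (zero_le_one.trans (le_max_left _ _))
      _ = C * m * ‖v‖ ^ 2 := by ring
  have herr : ∀ p q : H →L[ℝ] ℝ,
      p (u σ q) - p (ut σ q) = B (u σ p - ut σ p) (u σ q - ut σ q) := fun p q => by
    rw [← map_sub]
    refine galerkin_error_eq (B := B.toLinearMap₁₂) hBsymm (l := q) ?_ ?_ ?_ (hmem σ p)
    · exact fun v => (weightedForm_apply σ _ v).trans (hu σ hσ q v)
    · exact fun v hv => (weightedForm_apply σ _ v).trans (hut σ hσ q v hv)
    · exact fun v => (weightedForm_apply σ _ v).trans (hu σ hσ p v)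
  refine ⟨?_, ?_, ?_⟩
  · rw [herr, mul_right_comm _ ‖u σ l - ut σ l‖]
    exact ContinuousLinearMap.abs_apply_le_of_apply_self_le hBsymm hB0 hBle _ _
  · rw [herr]
    exact hB0 _
  · rw [herr]
    exact hBle _

/-- For all `l, r ∈ H'` and all `σ ∈ ℝ^n_+`, with
`C_σ := C·max{1,σ_1,…,σ_n}`, the error of the Galerkin-approximated measurement
satisfies `|𝓕_{l,r}(σ) − F_{l,r}(σ)| ≤ C_σ·‖u_σ^l − ũ_σ^l‖·‖u_σ^r − ũ_σ^r‖`;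
in particular, for `l = r` one has
`0 ≤ 𝓕_{l,l}(σ) − F_{l,l}(σ) ≤ C_σ·‖u_σ^l − ũ_σ^l‖²`. -/
theorem stmt_16
    {H : Type*} [NormedAddCommGroup H] [InnerProductSpace ℝ H] [CompleteSpace H]
    {n : ℕ}
    (b0 : H →L[ℝ] H →L[ℝ] ℝ) (b : Fin n → H →L[ℝ] H →L[ℝ] ℝ)
    (hb0symm : ∀ u v : H, b0 u v = b0 v u)
    (hb0pos : ∀ v : H, 0 ≤ b0 v v)
    (hbsymm : ∀ i, ∀ u v : H, b i u v = b i v u)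
    (hbpos : ∀ i, ∀ v : H, 0 ≤ b i v v)
    (C β : ℝ) (hβ : 0 < β) (hCβ : β ≤ C)
    (hcoer : ∀ v : H, β * ‖v‖ ^ 2 ≤ b0 v v + ∑ i, b i v v)
    (hbound : ∀ v : H, b0 v v + ∑ i, b i v v ≤ C * ‖v‖ ^ 2)
    (u : (Fin n → ℝ) → (H →L[ℝ] ℝ) → H)
    (hu : ∀ σ : Fin n → ℝ, (∀ i, 0 < σ i) → ∀ l : H →L[ℝ] ℝ,
      ∀ v : H, b0 (u σ l) v + ∑ i, σ i * b i (u σ l) v = l v)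
    (V : Submodule ℝ H) [FiniteDimensional ℝ V]
    (ut : (Fin n → ℝ) → (H →L[ℝ] ℝ) → H)
    (hmem : ∀ σ l, ut σ l ∈ V)
    (hut : ∀ σ : Fin n → ℝ, (∀ i, 0 < σ i) → ∀ l : H →L[ℝ] ℝ,
      ∀ v ∈ V, b0 (ut σ l) v + ∑ i, σ i * b i (ut σ l) v = l v) :
    ∀ l r : H →L[ℝ] ℝ, ∀ σ : Fin n → ℝ, (∀ i, 0 < σ i) →
      |r (u σ l) - r (ut σ l)| ≤
        C * max 1 (⨆ i, σ i) * ‖u σ l - ut σ l‖ * ‖u σ r - ut σ r‖ ∧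
      0 ≤ l (u σ l) - l (ut σ l) ∧
      l (u σ l) - l (ut σ l) ≤ C * max 1 (⨆ i, σ i) * ‖u σ l - ut σ l‖ ^ 2 :=
  stmt_16_general b0 b hb0symm hb0pos hbsymm hbpos C hbound u hu V ut hmem hut
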